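/- arXiv:2111.00804 — 10 statements merged into one kernel-verified Lean document; each statement's English description precedes it below -/
import Mathlib

section
/- Let θ : ℝ → ℝ be three times differentiable and set κ = θ', T(s) = (cos θ(s), sin θ(s)), N(s) = (−sin θ(s), cos θ(s)). Suppose there exist a vector a ∈ ℝ² and a function c : ℝ → ℝ such that for all s, (κ(s)² + c(s))·T(s) − κ'(s)·N(s) + a/2 = 0. Then there exists a constant λ ∈ ℝ such that κ''(s) + (1/2)κ(s)³ − λ κ(s) = 0 for all s. -/
/-- The Euler–Lagrange equation of the elastic energy implies the
elastica curvature equation `κ'' + κ³/2 − λκ = 0`. -/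
theorem elastica_curvature_equation (θ : ℝ → ℝ)
    (h1 : ∀ s, DifferentiableAt ℝ θ s)
    (h2 : ∀ s, DifferentiableAt ℝ (deriv θ) s)
    (h3 : ∀ s, DifferentiableAt ℝ (deriv (deriv θ)) s)
    (a : ℝ × ℝ) (c : ℝ → ℝ)
    (hEL : ∀ s : ℝ,
      ((deriv θ s) ^ 2 + c s) • ((Real.cos (θ s), Real.sin (θ s)) : ℝ × ℝ)
        - (deriv (deriv θ) s) • ((-Real.sin (θ s), Real.cos (θ s)) : ℝ × ℝ)
        + (1 / 2 : ℝ) • a = 0) :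
    ∃ lam : ℝ, ∀ s : ℝ,
      deriv (deriv (deriv θ)) s + (1 / 2) * (deriv θ s) ^ 3 - lam * deriv θ s = 0 := by
  set κ : ℝ → ℝ := deriv θ with hκdef
  -- component equations
  have hE1 : ∀ s, (κ s ^ 2 + c s) * Real.cos (θ s) + deriv κ s * Real.sin (θ s)
      + a.1 / 2 = 0 := by
    intro s
    have h := congrArg Prod.fst (hEL s)
    simp [Prod.smul_def, smul_eq_mul] at h
    linarith
  have hE2 : ∀ s, (κ s ^ 2 + c s) * Real.sin (θ s) - deriv κ s * Real.cos (θ s)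
      + a.2 / 2 = 0 := by
    intro s
    have h := congrArg Prod.snd (hEL s)
    simp [Prod.smul_def, smul_eq_mul] at h
    linarith
  have pyth : ∀ s, Real.sin (θ s) ^ 2 + Real.cos (θ s) ^ 2 = 1 := fun s =>
    Real.sin_sq_add_cos_sq (θ s)
  have hkd : ∀ s, deriv κ s = (a.2 * Real.cos (θ s) - a.1 * Real.sin (θ s)) / 2 := by
    intro s
    linear_combination Real.sin (θ s) * hE1 s - Real.cos (θ s) * hE2 s
      - deriv κ s * pyth s
  have hc : ∀ s, κ s ^ 2 + c s = -(a.1 * Real.cos (θ s) + a.2 * Real.sin (θ s)) / 2 := by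
    intro s
    linear_combination Real.cos (θ s) * hE1 s + Real.sin (θ s) * hE2 s
      - (κ s ^ 2 + c s) * pyth s
  -- second derivative of κ
  have hd2 : ∀ s, deriv (deriv κ) s = (κ s ^ 2 + c s) * κ s := by
    intro s
    have hfun : deriv κ = fun t => (a.2 * Real.cos (θ t) - a.1 * Real.sin (θ t)) / 2 :=
      funext hkd
    have hθ : HasDerivAt θ (κ s) s := (h1 s).hasDerivAt
    have hcos : HasDerivAt (fun t => Real.cos (θ t)) (-Real.sin (θ s) * κ s) s :=
      (Real.hasDerivAt_cos (θ s)).comp s hθ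
    have hsin : HasDerivAt (fun t => Real.sin (θ t)) (Real.cos (θ s) * κ s) s :=
      (Real.hasDerivAt_sin (θ s)).comp s hθ
    have hder : HasDerivAt (fun t => (a.2 * Real.cos (θ t) - a.1 * Real.sin (θ t)) / 2)
        ((a.2 * (-Real.sin (θ s) * κ s) - a.1 * (Real.cos (θ s) * κ s)) / 2) s :=
      ((hcos.const_mul a.2).sub (hsin.const_mul a.1)).div_const 2
    rw [hfun, hder.deriv]
    linear_combination (-(κ s)) * hc s
  -- the conserved quantity
  set g : ℝ → ℝ := fun s => κ s ^ 2 / 2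
      - (a.1 * Real.cos (θ s) + a.2 * Real.sin (θ s)) / 2 with hgdef
  have hg : ∀ s, HasDerivAt g 0 s := by
    intro s
    have hθ : HasDerivAt θ (κ s) s := (h1 s).hasDerivAt
    have hκd : HasDerivAt κ (deriv κ s) s := (h2 s).hasDerivAt
    have hcos : HasDerivAt (fun t => Real.cos (θ t)) (-Real.sin (θ s) * κ s) s :=
      (Real.hasDerivAt_cos (θ s)).comp s hθ
    have hsin : HasDerivAt (fun t => Real.sin (θ t)) (Real.cos (θ s) * κ s) s :=
      (Real.hasDerivAt_sin (θ s)).comp s hθ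
    have hsq : HasDerivAt (fun t => κ t ^ 2) (2 * κ s ^ 1 * deriv κ s) s := hκd.pow 2
    have hder : HasDerivAt g
        ((2 * κ s ^ 1 * deriv κ s) / 2
          - (a.1 * (-Real.sin (θ s) * κ s) + a.2 * (Real.cos (θ s) * κ s)) / 2) s :=
      (hsq.div_const 2).sub
        (((hcos.const_mul a.1).add (hsin.const_mul a.2)).div_const 2)
    convert hder using 1
    have := hkd s
    ring_nf
    ring_nf at this
    linear_combination (-(κ s)) * this
  have hconst : ∀ s, g s = g 0 :=
    fun s => is_const_of_deriv_eq_zero (fun t => (hg t).differentiableAt)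
      (fun t => (hg t).deriv) s 0
  refine ⟨g 0, fun s => ?_⟩
  have h3' : deriv (deriv (deriv θ)) s = (κ s ^ 2 + c s) * κ s := hd2 s
  have hgs : g s = g 0 := hconst s
  have hgs' : κ s ^ 2 / 2 - (a.1 * Real.cos (θ s) + a.2 * Real.sin (θ s)) / 2 = g 0 := hgs
  linear_combination h3' + κ s * hgs' + κ s * hc s
end

section
/- Let θ : ℝ → ℝ be twice differentiable and set κ = θ', T(s) = (cos θ(s), sin θ(s)), N(s) = (−sin θ(s), cos θ(s)). Suppose there exist a vector a ∈ ℝ² and a function c : ℝ → ℝ such that for all s, (κ(s)² + c(s))·T(s) − κ'(s)·N(s) + a/2 = 0. Then there exist constants μ ≥ 0 and φ ∈ ℝ such that θ''(s) + μ sin(θ(s) − φ) = 0 for all s. -/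
open Real

theorem Prod.exists_polar (a : ℝ × ℝ) :
    ∃ r : ℝ, 0 ≤ r ∧ ∃ φ : ℝ, a.1 = r * cos φ ∧ a.2 = r * sin φ := by
  let z : ℂ := ⟨a.1, a.2⟩
  exact ⟨‖z‖, norm_nonneg z, z.arg, (Complex.norm_mul_cos_arg z).symm,
    (Complex.norm_mul_sin_arg z).symm⟩

theorem normal_coeff_eq_of_frenet_combination_eq_zero (θ l k : ℝ) (a : ℝ × ℝ)
    (h : l • ((cos θ, sin θ) : ℝ × ℝ) - k • ((-sin θ, cos θ) : ℝ × ℝ) + (1 / 2 : ℝ) • a = 0) :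
    k = (a.2 * cos θ - a.1 * sin θ) / 2 := by
  have h₁ : l * cos θ + k * sin θ + a.1 / 2 = 0 := by
    simpa [div_eq_inv_mul] using congrArg Prod.fst h
  have h₂ : l * sin θ - k * cos θ + a.2 / 2 = 0 := by
    simpa [div_eq_inv_mul] using congrArg Prod.snd h
  -- pair with the unit normal `(-sin θ, cos θ)`, which kills the tangential term
  linear_combination sin θ * h₁ - cos θ * h₂ - k * sin_sq_add_cos_sq θ

theorem elastica_pendulum_equation_general (θ : ℝ → ℝ)
    (a : ℝ × ℝ) (c : ℝ → ℝ)
    (hEL : ∀ s : ℝ,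
      ((deriv θ s) ^ 2 + c s) • ((Real.cos (θ s), Real.sin (θ s)) : ℝ × ℝ)
        - (deriv (deriv θ) s) • ((-Real.sin (θ s), Real.cos (θ s)) : ℝ × ℝ)
        + (1 / 2 : ℝ) • a = 0) :
    ∃ μ : ℝ, 0 ≤ μ ∧ ∃ φ : ℝ, ∀ s : ℝ,
      deriv (deriv θ) s + μ * Real.sin (θ s - φ) = 0 := by
  obtain ⟨r, hr, φ, ha₁, ha₂⟩ := a.exists_polar
  refine ⟨r / 2, by positivity, φ, fun s => ?_⟩
  rw [normal_coeff_eq_of_frenet_combination_eq_zero _ _ _ a (hEL s), ha₁, ha₂, sin_sub]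
  ring

/-- The Euler–Lagrange equation of the elastic energy implies the
pendulum equation `θ'' + μ sin(θ − φ) = 0`. -/
theorem elastica_pendulum_equation (θ : ℝ → ℝ)
    (h1 : ∀ s, DifferentiableAt ℝ θ s)
    (h2 : ∀ s, DifferentiableAt ℝ (deriv θ) s)
    (a : ℝ × ℝ) (c : ℝ → ℝ)
    (hEL : ∀ s : ℝ,
      ((deriv θ s) ^ 2 + c s) • ((Real.cos (θ s), Real.sin (θ s)) : ℝ × ℝ)
        - (deriv (deriv θ) s) • ((-Real.sin (θ s), Real.cos (θ s)) : ℝ × ℝ)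
        + (1 / 2 : ℝ) • a = 0) :
    ∃ μ : ℝ, 0 ≤ μ ∧ ∃ φ : ℝ, ∀ s : ℝ,
      deriv (deriv θ) s + μ * Real.sin (θ s - φ) = 0 :=
  elastica_pendulum_equation_general θ a c hEL
end

section
/- Let θ : ℝ → ℝ be twice differentiable, κ = θ', T(s) = (cos θ(s), sin θ(s)), N(s) = (−sin θ(s), cos θ(s)), and let a ∈ ℝ². If κ'(s) = (1/2)⟨a, N(s)⟩ for all s, then there exists a constant λ ∈ ℝ such that κ(s)²/2 − λ = (1/2)⟨a, T(s)⟩ for all s. -/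
/-- The normal component `κ' = ⟨a, N⟩/2` of the Euler–Lagrange equation
integrates to the first integral `κ²/2 − λ = ⟨a, T⟩/2`. -/
theorem elastica_first_integral (θ : ℝ → ℝ)
    (h1 : ∀ s, DifferentiableAt ℝ θ s)
    (h2 : ∀ s, DifferentiableAt ℝ (deriv θ) s)
    (a : ℝ × ℝ)
    (hnormal : ∀ s : ℝ,
      deriv (deriv θ) s
        = (1 / 2) * (a.1 * (-Real.sin (θ s)) + a.2 * Real.cos (θ s))) :
    ∃ lam : ℝ, ∀ s : ℝ,
      (deriv θ s) ^ 2 / 2 - lam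
        = (1 / 2) * (a.1 * Real.cos (θ s) + a.2 * Real.sin (θ s)) := by
  set f : ℝ → ℝ := fun s =>
    (deriv θ s) ^ 2 / 2 - (1 / 2) * (a.1 * Real.cos (θ s) + a.2 * Real.sin (θ s)) with hf
  have key : ∀ s, HasDerivAt f 0 s := by
    intro s
    have hθ : HasDerivAt θ (deriv θ s) s := (h1 s).hasDerivAt
    have hκ : HasDerivAt (deriv θ) (deriv (deriv θ) s) s := (h2 s).hasDerivAt
    have hcos : HasDerivAt (fun t => Real.cos (θ t)) (-Real.sin (θ s) * deriv θ s) s :=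
      (Real.hasDerivAt_cos (θ s)).comp s hθ
    have hsin : HasDerivAt (fun t => Real.sin (θ t)) (Real.cos (θ s) * deriv θ s) s :=
      (Real.hasDerivAt_sin (θ s)).comp s hθ
    have h : HasDerivAt f
        ((2 * deriv θ s ^ 1 * deriv (deriv θ) s) / 2 -
          (1 / 2) * (a.1 * (-Real.sin (θ s) * deriv θ s) + a.2 * (Real.cos (θ s) * deriv θ s))) s :=
      ((hκ.pow 2).div_const 2).sub
        (((hcos.const_mul a.1).add (hsin.const_mul a.2)).const_mul (1 / 2))
    have heq : (2 * deriv θ s ^ 1 * deriv (deriv θ) s) / 2 -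
          (1 / 2) * (a.1 * (-Real.sin (θ s) * deriv θ s) + a.2 * (Real.cos (θ s) * deriv θ s)) = 0 := by
      rw [hnormal s]; ring
    rwa [heq] at h
  have hconst : ∀ s, f s = f 0 :=
    fun s => is_const_of_deriv_eq_zero (fun t => (key t).differentiableAt)
      (fun t => (key t).deriv) s 0
  exact ⟨f 0, fun s => by have := hconst s; simp only [hf] at this ⊢; linarith⟩
end

section
/- Let h > 0 and Θ : ℤ → ℝ, and define Tₙ = (cos Θₙ, sin Θₙ) ∈ ℝ² and κₙ = (2/h) tan((Θₙ − Θₙ₋₁)/2). Assume cos((Θₙ − Θₙ₋₁)/2) ≠ 0 and 1 + ⟨Tₙ₋₁, Tₙ⟩ ≠ 0 for all n. Suppose there exist a ∈ ℝ² and c : ℤ → ℝ such that for all n, (2/h)·Tₙ₋₁/(1 + ⟨Tₙ₋₁, Tₙ⟩) + (2/h)·Tₙ₊₁/(1 + ⟨Tₙ, Tₙ₊₁⟩) + 2cₙ Tₙ + h a = 0. Then there exists α ∈ ℝ such that for all n, (κₙ₊₁ + κₙ₋₁)(1 + (h²/4)κₙ²) = α κₙ. -/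
/-!
Only the normal component of the Euler–Lagrange equation matters: with
`tₙ = tan ((Θₙ - Θₙ₋₁) / 2)` it says `tₙ₊₁ - tₙ = (h² / 2) ⟨a, Nₙ⟩`, where `Nₙ = (sin Θₙ, -cos Θₙ)`.
Rotating by the half angles, `⟨a, Tₙ⟩ + tₙ ⟨a, Nₙ⟩ = ⟨a, Tₙ₋₁⟩ - tₙ ⟨a, Nₙ₋₁⟩`, which makes
`2 (1 + tₙ²) + h² (⟨a, Tₙ⟩ + tₙ ⟨a, Nₙ⟩)` independent of `n`; this constant is `α`.
-/

open Real

noncomputable def tangentialPart (a : ℝ × ℝ) (θ : ℝ) : ℝ := a.1 * cos θ + a.2 * sin θ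

noncomputable def normalPart (a : ℝ × ℝ) (θ : ℝ) : ℝ := a.1 * sin θ - a.2 * cos θ

lemma one_add_cos_mul_cos_add_sin_mul_sin (x y : ℝ) :
    1 + (cos x * cos y + sin x * sin y) = 2 * cos ((y - x) / 2) ^ 2 := by
  rw [cos_sq, show 2 * ((y - x) / 2) = y - x by ring, cos_sub]
  ring

lemma sin_sub_div_one_add_cos_sub {x y : ℝ} (hxy : cos ((y - x) / 2) ≠ 0) :
    (cos x * sin y - sin x * cos y) / (1 + (cos x * cos y + sin x * sin y)) =
      tan ((y - x) / 2) := by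
  rw [one_add_cos_mul_cos_add_sin_mul_sin,
    show cos x * sin y - sin x * cos y = sin (2 * ((y - x) / 2)) by
      rw [show 2 * ((y - x) / 2) = y - x by ring, sin_sub]; ring,
    sin_two_mul, tan_eq_sin_div_cos]
  field_simp

lemma tangentialPart_add_tan_mul_normalPart (a : ℝ × ℝ) (θ : ℝ) {φ : ℝ} (hφ : cos φ ≠ 0) :
    tangentialPart a θ + tan φ * normalPart a θ = tangentialPart a (θ - φ) / cos φ := by
  simp only [tangentialPart, normalPart, tan_eq_sin_div_cos, cos_sub, sin_sub]
  field_simp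
  ring

lemma normalPart_add_sub_normalPart_sub (a : ℝ × ℝ) (θ φ : ℝ) :
    normalPart a (θ + φ) - normalPart a (θ - φ) = 2 * sin φ * tangentialPart a θ := by
  simp only [tangentialPart, normalPart, cos_add, sin_add, cos_sub, sin_sub]
  ring

section HalfAngle

variable {a : ℝ × ℝ} {x y : ℝ}

lemma tangentialPart_add_tan_half_mul_normalPart (hxy : cos ((y - x) / 2) ≠ 0) :
    tangentialPart a y + tan ((y - x) / 2) * normalPart a y =
      tangentialPart a x - tan ((y - x) / 2) * normalPart a x := by
  have hneg : cos (-((y - x) / 2)) ≠ 0 := by rwa [cos_neg]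
  rw [tangentialPart_add_tan_mul_normalPart a y hxy,
    show y - (y - x) / 2 = x - -((y - x) / 2) by ring, ← cos_neg ((y - x) / 2),
    ← tangentialPart_add_tan_mul_normalPart a x hneg, tan_neg]
  ring

lemma normalPart_sub_normalPart_mul_one_add_tan_sq (hxy : cos ((y - x) / 2) ≠ 0) :
    (normalPart a y - normalPart a x) * (1 + tan ((y - x) / 2) ^ 2) =
      2 * tan ((y - x) / 2) * (tangentialPart a y + tan ((y - x) / 2) * normalPart a y) := by
  have hdiff := normalPart_add_sub_normalPart_sub a ((x + y) / 2) ((y - x) / 2)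
  rw [show (x + y) / 2 + (y - x) / 2 = y by ring, show (x + y) / 2 - (y - x) / 2 = x by ring]
    at hdiff
  rw [hdiff, tangentialPart_add_tan_mul_normalPart a y hxy,
    show y - (y - x) / 2 = (x + y) / 2 by ring, tan_eq_sin_div_cos]
  field_simp
  rw [cos_sq_add_sin_sq]
  ring

end HalfAngle

lemma tan_half_sub_tan_half_of_eulerLagrange {a : ℝ × ℝ} {h c x y z : ℝ} (hh : h ≠ 0)
    (hxy : cos ((y - x) / 2) ≠ 0) (hyz : cos ((z - y) / 2) ≠ 0)
    (hEL : (2 / h / (1 + (cos x * cos y + sin x * sin y))) • (cos x, sin x)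
      + (2 / h / (1 + (cos y * cos z + sin y * sin z))) • (cos z, sin z)
      + (2 * c) • (cos y, sin y) + h • a = 0) :
    tan ((z - y) / 2) - tan ((y - x) / 2) = h ^ 2 / 2 * normalPart a y := by
  have e := congrArg (fun p : ℝ × ℝ => cos y * p.2 - sin y * p.1) hEL
  simp only [Prod.fst_add, Prod.snd_add, Prod.smul_fst, Prod.smul_snd, smul_eq_mul,
    Prod.fst_zero, Prod.snd_zero] at e
  rw [← sin_sub_div_one_add_cos_sub hxy, ← sin_sub_div_one_add_cos_sub hyz, normalPart]
  linear_combination (norm := skip) (h / 2) * e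
  field_simp
  ring

noncomputable def halfAngle (Θ : ℤ → ℝ) (n : ℤ) : ℝ := (Θ n - Θ (n - 1)) / 2

noncomputable def elasticaInvariant (a : ℝ × ℝ) (h : ℝ) (Θ : ℤ → ℝ) (n : ℤ) : ℝ :=
  2 * (1 + tan (halfAngle Θ n) ^ 2) +
    h ^ 2 * (tangentialPart a (Θ n) + tan (halfAngle Θ n) * normalPart a (Θ n))

section Recurrence

variable {a : ℝ × ℝ} {h : ℝ} {Θ : ℤ → ℝ}

lemma halfAngle_add_one (n : ℤ) : halfAngle Θ (n + 1) = (Θ (n + 1) - Θ n) / 2 := by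
  simp [halfAngle]

variable (hcos : ∀ n, cos (halfAngle Θ n) ≠ 0)
  (hstep : ∀ n, tan (halfAngle Θ (n + 1)) - tan (halfAngle Θ n) = h ^ 2 / 2 * normalPart a (Θ n))
include hcos hstep

lemma elasticaInvariant_add_one (n : ℤ) :
    elasticaInvariant a h Θ (n + 1) = elasticaInvariant a h Θ n := by
  have hrot := tangentialPart_add_tan_half_mul_normalPart (a := a) (x := Θ n) (y := Θ (n + 1))
    (halfAngle_add_one n ▸ hcos (n + 1))
  rw [← halfAngle_add_one] at hrot
  rw [elasticaInvariant, elasticaInvariant, hrot]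
  linear_combination (2 * (tan (halfAngle Θ (n + 1)) + tan (halfAngle Θ n))) * hstep n

lemma elasticaInvariant_eq_elasticaInvariant_zero (n : ℤ) :
    elasticaInvariant a h Θ n = elasticaInvariant a h Θ 0 := by
  simpa using (Function.Periodic.int_mul_eq (c := 1) (elasticaInvariant_add_one hcos hstep) n)

lemma tan_halfAngle_recurrence (n : ℤ) :
    (tan (halfAngle Θ (n + 1)) + tan (halfAngle Θ (n - 1))) * (1 + tan (halfAngle Θ n) ^ 2) =
      elasticaInvariant a h Θ n * tan (halfAngle Θ n) := by
  have hrot : (normalPart a (Θ n) - normalPart a (Θ (n - 1))) * (1 + tan (halfAngle Θ n) ^ 2) =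
      2 * tan (halfAngle Θ n) *
        (tangentialPart a (Θ n) + tan (halfAngle Θ n) * normalPart a (Θ n)) :=
    normalPart_sub_normalPart_mul_one_add_tan_sq (hcos n)
  have hprev := hstep (n - 1)
  rw [sub_add_cancel] at hprev
  rw [elasticaInvariant]
  linear_combination (1 + tan (halfAngle Θ n) ^ 2) * (hstep n - hprev) + h ^ 2 / 2 * hrot

end Recurrence

theorem discrete_elastica_recurrence_from_EL_general (h : ℝ) (hh : 0 < h) (Θ : ℤ → ℝ)
    (T : ℤ → ℝ × ℝ) (hT : ∀ n : ℤ, T n = (Real.cos (Θ n), Real.sin (Θ n)))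
    (κ : ℤ → ℝ) (hκ : ∀ n : ℤ, κ n = 2 / h * Real.tan ((Θ n - Θ (n - 1)) / 2))
    (hcos : ∀ n : ℤ, Real.cos ((Θ n - Θ (n - 1)) / 2) ≠ 0)
    (a : ℝ × ℝ) (c : ℤ → ℝ)
    (hEL : ∀ n : ℤ,
      (2 / h / (1 + ((T (n - 1)).1 * (T n).1 + (T (n - 1)).2 * (T n).2))) • T (n - 1)
      + (2 / h / (1 + ((T n).1 * (T (n + 1)).1 + (T n).2 * (T (n + 1)).2))) • T (n + 1)
      + (2 * c n) • T n + h • a = 0) :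
    ∃ α : ℝ, ∀ n : ℤ,
      (κ (n + 1) + κ (n - 1)) * (1 + h ^ 2 / 4 * (κ n) ^ 2) = α * κ n := by
  have hstep (n : ℤ) :
      tan (halfAngle Θ (n + 1)) - tan (halfAngle Θ n) = h ^ 2 / 2 * normalPart a (Θ n) := by
    rw [halfAngle_add_one]
    exact tan_half_sub_tan_half_of_eulerLagrange hh.ne' (hcos n)
      (halfAngle_add_one n ▸ hcos (n + 1)) (by simpa only [hT] using hEL n)
  refine ⟨elasticaInvariant a h Θ 0, fun n => ?_⟩
  have hrec := tan_halfAngle_recurrence hcos hstep n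
  rw [elasticaInvariant_eq_elasticaInvariant_zero hcos hstep] at hrec
  have hκ' : ∀ n, κ n = 2 / h * tan (halfAngle Θ n) := hκ
  rw [hκ', hκ', hκ']
  field_simp
  linear_combination 4 * hrec

/-- The Euler–Lagrange equation of the discrete bending energy implies the
discrete elastica curvature recurrence `κₙ₊₁ + κₙ₋₁ = ακₙ/(1 + (h²/4)κₙ²)`. -/
theorem discrete_elastica_recurrence_from_EL (h : ℝ) (hh : 0 < h) (Θ : ℤ → ℝ)
    (T : ℤ → ℝ × ℝ) (hT : ∀ n : ℤ, T n = (Real.cos (Θ n), Real.sin (Θ n)))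
    (κ : ℤ → ℝ) (hκ : ∀ n : ℤ, κ n = 2 / h * Real.tan ((Θ n - Θ (n - 1)) / 2))
    (hcos : ∀ n : ℤ, Real.cos ((Θ n - Θ (n - 1)) / 2) ≠ 0)
    (hden : ∀ n : ℤ,
      1 + ((T (n - 1)).1 * (T n).1 + (T (n - 1)).2 * (T n).2) ≠ 0)
    (a : ℝ × ℝ) (c : ℤ → ℝ)
    (hEL : ∀ n : ℤ,
      (2 / h / (1 + ((T (n - 1)).1 * (T n).1 + (T (n - 1)).2 * (T n).2))) • T (n - 1)
      + (2 / h / (1 + ((T n).1 * (T (n + 1)).1 + (T n).2 * (T (n + 1)).2))) • T (n + 1)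
      + (2 * c n) • T n + h • a = 0) :
    ∃ α : ℝ, ∀ n : ℤ,
      (κ (n + 1) + κ (n - 1)) * (1 + h ^ 2 / 4 * (κ n) ^ 2) = α * κ n :=
  discrete_elastica_recurrence_from_EL_general h hh Θ T hT κ hκ hcos a c hEL
end

section
/- Let h > 0, α ∈ ℝ, and let κ : ℤ → ℝ satisfy (κₙ₊₁ + κₙ₋₁)(1 + (h²/4)κₙ²) = α κₙ for all n ∈ ℤ. Then the quantity κₙ₊₁² + κₙ² − α κₙ₊₁ κₙ + (h²/4) κₙ₊₁² κₙ² is independent of n, i.e., there exists C ∈ ℝ with κₙ₊₁² + κₙ² − α κₙ₊₁ κₙ + (h²/4) κₙ₊₁² κₙ² = C for all n. -/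
/-!
Multiplying the recurrence at `n + 1` by `κₙ₊₂ − κₙ` gives exactly the difference of the
quantity at `n + 1` and at `n`, so the quantity is `1`-periodic on `ℤ`, hence constant.
-/

/-- For the discrete elastica, `β = h²/4`, `a = κₙ₊₁` and `b = κₙ`. -/
def elasticaEnergy {R : Type*} [CommRing R] (α β a b : R) : R :=
  a ^ 2 + b ^ 2 - α * a * b + β * a ^ 2 * b ^ 2

theorem elasticaEnergy_eq_of_recurrence {R : Type*} [CommRing R] {α β x y z : R}
    (hrec : (z + x) * (1 + β * y ^ 2) = α * y) :
    elasticaEnergy α β z y = elasticaEnergy α β y x := by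
  unfold elasticaEnergy
  linear_combination (z - x) * hrec

theorem discrete_elastica_first_integral_general (h : ℝ) (α : ℝ) (κ : ℤ → ℝ)
    (hrec : ∀ n : ℤ,
      (κ (n + 1) + κ (n - 1)) * (1 + h ^ 2 / 4 * (κ n) ^ 2) = α * κ n) :
    ∃ C : ℝ, ∀ n : ℤ,
      (κ (n + 1)) ^ 2 + (κ n) ^ 2 - α * κ (n + 1) * κ n
        + h ^ 2 / 4 * (κ (n + 1)) ^ 2 * (κ n) ^ 2 = C := by
  set E : ℤ → ℝ := fun n => elasticaEnergy α (h ^ 2 / 4) (κ (n + 1)) (κ n)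
  have hperiodic : Function.Periodic E 1 := fun n =>
    elasticaEnergy_eq_of_recurrence (by simpa using hrec (n + 1))
  refine ⟨E 0, fun n => ?_⟩
  exact (by simpa using hperiodic.int_mul n 0 : E n = E 0)

/-- The discrete elastica recurrence has the conserved quantity
`κₙ₊₁² + κₙ² − ακₙ₊₁κₙ + (h²/4)κₙ₊₁²κₙ²`. -/
theorem discrete_elastica_first_integral (h : ℝ) (hh : 0 < h) (α : ℝ) (κ : ℤ → ℝ)
    (hrec : ∀ n : ℤ,
      (κ (n + 1) + κ (n - 1)) * (1 + h ^ 2 / 4 * (κ n) ^ 2) = α * κ n) :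
    ∃ C : ℝ, ∀ n : ℤ,
      (κ (n + 1)) ^ 2 + (κ n) ^ 2 - α * κ (n + 1) * κ n
        + h ^ 2 / 4 * (κ (n + 1)) ^ 2 * (κ n) ^ 2 = C :=
  discrete_elastica_first_integral_general h α κ hrec
end

section
/- Let ε ∈ ℝ and let θ : ℤ → ℝ satisfy sin((θₙ₊₁ − 2θₙ + θₙ₋₁)/4) + ε sin((θₙ₊₁ + 2θₙ + θₙ₋₁)/4) = 0 for all n ∈ ℤ. Then the quantity cos((θₙ₊₁ − θₙ)/2) + ε cos((θₙ₊₁ + θₙ)/2) is independent of n, i.e., there exists Λ ∈ ℝ with cos((θₙ₊₁ − θₙ)/2) + ε cos((θₙ₊₁ + θₙ)/2) = Λ for all n. -/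
/-!
Writing `E(x, y) = cos((x - y)/2) + ε cos((x + y)/2)`, sum-to-product turns the difference
`E(θₙ₊₁, θₙ) - E(θₙ, θₙ₋₁)` into `-2 sin((θₙ₊₁ - θₙ₋₁)/4)` times the left-hand side of the
pendulum equation, so the energy does not change from one step to the next.
-/

open Real

noncomputable def pendulumEnergy (ε x y : ℝ) : ℝ :=
  cos ((x - y) / 2) + ε * cos ((x + y) / 2)

theorem pendulumEnergy_sub_pendulumEnergy (ε a b c : ℝ) :
    pendulumEnergy ε a b - pendulumEnergy ε b c =
      -2 * sin ((a - c) / 4) * (sin ((a - 2 * b + c) / 4) + ε * sin ((a + 2 * b + c) / 4)) := by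
  have hsub : cos ((a - b) / 2) - cos ((b - c) / 2) =
      -2 * sin ((a - c) / 4) * sin ((a - 2 * b + c) / 4) := by
    rw [cos_sub_cos]; ring_nf
  have hadd : cos ((a + b) / 2) - cos ((b + c) / 2) =
      -2 * sin ((a - c) / 4) * sin ((a + 2 * b + c) / 4) := by
    rw [cos_sub_cos]; ring_nf
  unfold pendulumEnergy
  linear_combination hsub + ε * hadd

theorem pendulumEnergy_eq_of_pendulum {ε a b c : ℝ}
    (h : sin ((a - 2 * b + c) / 4) + ε * sin ((a + 2 * b + c) / 4) = 0) :
    pendulumEnergy ε a b = pendulumEnergy ε b c := by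
  rw [← sub_eq_zero, pendulumEnergy_sub_pendulumEnergy, h, mul_zero]

/-- The discrete pendulum equation has the conserved quantity
`cos((θₙ₊₁ − θₙ)/2) + ε cos((θₙ₊₁ + θₙ)/2)`. -/
theorem discrete_pendulum_conserved_quantity (ε : ℝ) (θ : ℤ → ℝ)
    (hpend : ∀ n : ℤ,
      Real.sin ((θ (n + 1) - 2 * θ n + θ (n - 1)) / 4)
        + ε * Real.sin ((θ (n + 1) + 2 * θ n + θ (n - 1)) / 4) = 0) :
    ∃ Λ : ℝ, ∀ n : ℤ,
      Real.cos ((θ (n + 1) - θ n) / 2) + ε * Real.cos ((θ (n + 1) + θ n) / 2) = Λ := by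
  have hperiodic : Function.Periodic (fun n : ℤ => pendulumEnergy ε (θ (n + 1)) (θ n)) 1 := by
    intro n
    simpa using pendulumEnergy_eq_of_pendulum (hpend (n + 1))
  refine ⟨pendulumEnergy ε (θ 1) (θ 0), fun n => ?_⟩
  simpa [pendulumEnergy] using hperiodic.int_mul_eq n
end

section
/- Let ε ∈ ℝ, h > 0, and let θ : ℤ → ℝ satisfy sin((θₙ₊₁ − 2θₙ + θₙ₋₁)/4) + ε sin((θₙ₊₁ + 2θₙ + θₙ₋₁)/4) = 0 for all n ∈ ℤ. Let Λ = cos((θₙ₊₁ − θₙ)/2) + ε cos((θₙ₊₁ + θₙ)/2) (independent of n) and assume Λ ≠ 0 and cos((θₙ₊₁ − θₙ₋₁)/4) ≠ 0 for all n. Then κₙ := (2/h) tan((θₙ₊₁ − θₙ₋₁)/4) satisfies (κₙ₊₁ + κₙ₋₁)(1 + (h²/4)κₙ²) = α κₙ for all n, with α = 2(1 − ε²)/Λ². -/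
/-!
Write `aₙ = (θₙ₊₁ − θₙ₋₁)/4`, `dₙ = (θₙ₊₁ − 2θₙ + θₙ₋₁)/4`, `sₙ = (θₙ₊₁ + 2θₙ + θₙ₋₁)/4` and
`Pₙ = cos dₙ + ε cos sₙ`, so that `κₙ = (2/h) tan aₙ` and `sₙ − dₙ = θₙ`. Adding the conserved
quantity at two consecutive sites gives `Λ = cos aₙ · Pₙ`, and the pendulum equation gives
`Pₙ e^{i dₙ} = 1 + ε e^{−i θₙ}`. Since `aₙ₊₁ + aₙ₋₁ = 2aₙ + dₙ₊₁ − dₙ₋₁`,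
`(tan aₙ₊₁ + tan aₙ₋₁) Λ² = Pₙ₊₁ Pₙ₋₁ sin (aₙ₊₁ + aₙ₋₁)` is the imaginary part of
`e^{2i aₙ} (1 + ε e^{−i θₙ₊₁}) (1 + ε e^{i θₙ₋₁})`, which is `(1 − ε²) sin 2aₙ`; multiplying by
`1 + tan² aₙ = 1/cos² aₙ` gives the recurrence.
-/

open Real

lemma pendulum_mul_cos {ε d s : ℝ} (h : sin d + ε * sin s = 0) :
    (cos d + ε * cos s) * cos d = 1 + ε * cos (s - d) := by
  rw [cos_sub]
  linear_combination sin_sq_add_cos_sq d - sin d * h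

lemma pendulum_mul_sin {ε d s : ℝ} (h : sin d + ε * sin s = 0) :
    (cos d + ε * cos s) * sin d = -(ε * sin (s - d)) := by
  rw [sin_sub]
  linear_combination cos d * h

lemma pendulum_mul_pendulum_mul_sin {ε d₁ s₁ d₂ s₂ : ℝ}
    (h₁ : sin d₁ + ε * sin s₁ = 0) (h₂ : sin d₂ + ε * sin s₂ = 0) :
    (cos d₂ + ε * cos s₂) * (cos d₁ + ε * cos s₁) * sin ((s₂ + d₂ - (s₁ + d₁)) / 2)
      = (1 - ε ^ 2) * sin ((s₂ - d₂ - (s₁ - d₁)) / 2) := by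
  set x := s₁ - d₁
  set y := s₂ - d₂
  set P₁ := cos d₁ + ε * cos s₁
  set P₂ := cos d₂ + ε * cos s₂
  have hc₁ : P₁ * cos d₁ = 1 + ε * cos x := pendulum_mul_cos h₁
  have hs₁ : P₁ * sin d₁ = -(ε * sin x) := pendulum_mul_sin h₁
  have hc₂ : P₂ * cos d₂ = 1 + ε * cos y := pendulum_mul_cos h₂
  have hs₂ : P₂ * sin d₂ = -(ε * sin y) := pendulum_mul_sin h₂
  have harg : (s₂ + d₂ - (s₁ + d₁)) / 2 = (y - x) / 2 + d₂ - d₁ := by ring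
  -- the terms of order `ε` and `ε²` in the expansion below, written as sines of single angles
  have hε : sin ((y - x) / 2 - y) + sin ((y - x) / 2 + x) = 0 := by
    rw [← sub_neg_eq_add, ← sin_neg, sub_eq_zero]; congr 1; ring
  have hε2 : sin ((y - x) / 2 - (y - x)) = -sin ((y - x) / 2) := by
    rw [← sin_neg]; congr 1; ring
  calc P₂ * P₁ * sin ((s₂ + d₂ - (s₁ + d₁)) / 2)
      = sin ((y - x) / 2) * ((P₂ * cos d₂) * (P₁ * cos d₁) + (P₂ * sin d₂) * (P₁ * sin d₁))
        + cos ((y - x) / 2) * ((P₂ * sin d₂) * (P₁ * cos d₁) - (P₂ * cos d₂) * (P₁ * sin d₁)) := by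
        rw [harg, sin_sub, sin_add, cos_add]; ring
    _ = (1 - ε ^ 2) * sin ((y - x) / 2) := by
        rw [hc₁, hs₁, hc₂, hs₂]
        simp only [sin_sub, sin_add, cos_sub] at hε hε2
        linear_combination ε * hε + ε ^ 2 * hε2

lemma cos_half_add_cos_half (ε x y z : ℝ) :
    (cos ((z - y) / 2) + ε * cos ((z + y) / 2)) + (cos ((y - x) / 2) + ε * cos ((y + x) / 2))
      = 2 * cos ((z - x) / 4) * (cos ((z - 2 * y + x) / 4) + ε * cos ((z + 2 * y + x) / 4)) := by
  have h₁ := cos_add_cos ((z - y) / 2) ((y - x) / 2)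
  have h₂ := cos_add_cos ((z + y) / 2) ((y + x) / 2)
  ring_nf at h₁ h₂ ⊢
  linear_combination h₁ + ε * h₂

lemma tan_add_tan_mul_sq_mul_one_add_tan_sq {ε Λ a a₁ a₂ P₁ P₂ : ℝ}
    (h₁ : Λ = cos a₁ * P₁) (h₂ : Λ = cos a₂ * P₂)
    (hsin : P₂ * P₁ * sin (a₂ + a₁) = (1 - ε ^ 2) * sin (2 * a))
    (hc₁ : cos a₁ ≠ 0) (hc₂ : cos a₂ ≠ 0) (hc : cos a ≠ 0) :
    (tan a₂ + tan a₁) * Λ ^ 2 * (1 + tan a ^ 2) = 2 * (1 - ε ^ 2) * tan a := by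
  rw [sin_add, sin_two_mul] at hsin
  rw [tan_eq_sin_div_cos, tan_eq_sin_div_cos, tan_eq_sin_div_cos, sq Λ]
  nth_rw 1 [h₂]
  rw [h₁]
  field_simp
  rw [cos_sq_add_sin_sq]
  linear_combination hsin

section Sequence

variable {ε Λ : ℝ} {θ : ℤ → ℝ}

noncomputable def chordAngle (θ : ℤ → ℝ) (n : ℤ) : ℝ := (θ (n + 1) - θ (n - 1)) / 4

lemma eq_cos_chordAngle_mul_of_conserved
    (hΛ : ∀ n : ℤ, cos ((θ (n + 1) - θ n) / 2) + ε * cos ((θ (n + 1) + θ n) / 2) = Λ) (n : ℤ) :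
    Λ = cos (chordAngle θ n) * (cos ((θ (n + 1) - 2 * θ n + θ (n - 1)) / 4)
      + ε * cos ((θ (n + 1) + 2 * θ n + θ (n - 1)) / 4)) := by
  have hprev := hΛ (n - 1)
  rw [sub_add_cancel] at hprev
  unfold chordAngle
  linear_combination (cos_half_add_cos_half ε (θ (n - 1)) (θ n) (θ (n + 1)) - hΛ n - hprev) / 2

lemma tan_chordAngle_recurrence
    (hpend : ∀ n : ℤ, sin ((θ (n + 1) - 2 * θ n + θ (n - 1)) / 4)
      + ε * sin ((θ (n + 1) + 2 * θ n + θ (n - 1)) / 4) = 0)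
    (hΛ : ∀ n : ℤ, cos ((θ (n + 1) - θ n) / 2) + ε * cos ((θ (n + 1) + θ n) / 2) = Λ)
    (hcos : ∀ n : ℤ, cos (chordAngle θ n) ≠ 0) (n : ℤ) :
    (tan (chordAngle θ (n + 1)) + tan (chordAngle θ (n - 1))) * Λ ^ 2
      * (1 + tan (chordAngle θ n) ^ 2) = 2 * (1 - ε ^ 2) * tan (chordAngle θ n) := by
  refine tan_add_tan_mul_sq_mul_one_add_tan_sq (eq_cos_chordAngle_mul_of_conserved hΛ (n - 1))
    (eq_cos_chordAngle_mul_of_conserved hΛ (n + 1)) ?_ (hcos _) (hcos _) (hcos _)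
  convert pendulum_mul_pendulum_mul_sin (hpend (n - 1)) (hpend (n + 1)) using 3 <;>
    simp only [chordAngle, sub_add_cancel, add_sub_cancel_right] <;> ring

end Sequence

/-- If θ satisfies the discrete pendulum equation with conserved
quantity Λ ≠ 0, then the discrete curvature `κₙ = (2/h) tan((θₙ₊₁ − θₙ₋₁)/4)` satisfies
the discrete elastica recurrence with `α = 2(1 − ε²)/Λ²`. -/
theorem discrete_pendulum_implies_elastica_recurrence (ε h : ℝ) (hh : 0 < h)
    (θ : ℤ → ℝ)
    (hpend : ∀ n : ℤ,
      Real.sin ((θ (n + 1) - 2 * θ n + θ (n - 1)) / 4)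
        + ε * Real.sin ((θ (n + 1) + 2 * θ n + θ (n - 1)) / 4) = 0)
    (Λ : ℝ)
    (hΛ : ∀ n : ℤ,
      Real.cos ((θ (n + 1) - θ n) / 2) + ε * Real.cos ((θ (n + 1) + θ n) / 2) = Λ)
    (hΛ0 : Λ ≠ 0)
    (hcos : ∀ n : ℤ, Real.cos ((θ (n + 1) - θ (n - 1)) / 4) ≠ 0)
    (κ : ℤ → ℝ) (hκ : ∀ n : ℤ, κ n = 2 / h * Real.tan ((θ (n + 1) - θ (n - 1)) / 4)) :
    ∀ n : ℤ,
      (κ (n + 1) + κ (n - 1)) * (1 + h ^ 2 / 4 * (κ n) ^ 2)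
        = (2 * (1 - ε ^ 2) / Λ ^ 2) * κ n := by
  intro n
  have hrec := tan_chordAngle_recurrence hpend hΛ hcos n
  simp only [chordAngle] at hrec
  rw [hκ, hκ, hκ]
  field_simp
  linear_combination 4 * hrec
end

section
/- Let a, b ∈ ℝ with b ≠ 0, and let θ : ℤ × ℤ → ℝ satisfy the discrete potential modified KdV equation in the form sin((θ(l+1,m+1) − θ(l,m+1) + θ(l+1,m) − θ(l,m))/4) = (a/b) sin((θ(l+1,m+1) + θ(l,m+1) − θ(l+1,m) − θ(l,m))/4) for all (l,m) ∈ ℤ × ℤ. Define θ̃(l,m) = (−1)^m θ(l,m). Then θ̃ satisfies the discrete sine-Gordon equation sin((θ̃(l+1,m+1) − θ̃(l,m+1) − θ̃(l+1,m) + θ̃(l,m))/4) = (a/b) sin((θ̃(l+1,m+1) + θ̃(l,m+1) + θ̃(l+1,m) + θ̃(l,m))/4) for all (l,m). -/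
/-- The gauge transformation `θ(l,m) → (−1)^m θ(l,m)` maps solutions of the
discrete potential mKdV equation to solutions of the discrete sine-Gordon equation. -/
theorem dpmKdV_to_dsG (a b : ℝ) (hb : b ≠ 0) (θ : ℤ → ℤ → ℝ)
    (hdpmKdV : ∀ l m : ℤ,
      Real.sin ((θ (l + 1) (m + 1) - θ l (m + 1) + θ (l + 1) m - θ l m) / 4)
        = (a / b) * Real.sin ((θ (l + 1) (m + 1) + θ l (m + 1) - θ (l + 1) m - θ l m) / 4))
    (θt : ℤ → ℤ → ℝ) (hθt : ∀ l m : ℤ, θt l m = (-1 : ℝ) ^ m * θ l m) :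
    ∀ l m : ℤ,
      Real.sin ((θt (l + 1) (m + 1) - θt l (m + 1) - θt (l + 1) m + θt l m) / 4)
        = (a / b) * Real.sin ((θt (l + 1) (m + 1) + θt l (m + 1) + θt (l + 1) m + θt l m) / 4) := by
  intro l m
  have h := hdpmKdV l m
  have hpow : ((-1 : ℝ) ^ (m + 1)) = -((-1 : ℝ) ^ m) := by
    rw [zpow_add_one₀ (by norm_num : (-1 : ℝ) ≠ 0)]; ring
  rcases Int.even_or_odd m with he | ho
  · have hε : ((-1 : ℝ) ^ m) = 1 := he.neg_one_zpow
    rw [hθt, hθt, hθt, hθt, hpow, hε]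
    have e1 : (-(1:ℝ) * θ (l + 1) (m + 1) - -(1:ℝ) * θ l (m + 1) - 1 * θ (l + 1) m
        + 1 * θ l m) / 4
        = -((θ (l + 1) (m + 1) - θ l (m + 1) + θ (l + 1) m - θ l m) / 4) := by ring
    have e2 : (-(1:ℝ) * θ (l + 1) (m + 1) + -(1:ℝ) * θ l (m + 1) + 1 * θ (l + 1) m
        + 1 * θ l m) / 4
        = -((θ (l + 1) (m + 1) + θ l (m + 1) - θ (l + 1) m - θ l m) / 4) := by ring
    rw [e1, e2, Real.sin_neg, Real.sin_neg, h]; ring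
  · have hε : ((-1 : ℝ) ^ m) = -1 := ho.neg_one_zpow
    rw [hθt, hθt, hθt, hθt, hpow, hε]
    have e1 : (- -(1:ℝ) * θ (l + 1) (m + 1) - - -(1:ℝ) * θ l (m + 1) - -(1:ℝ) * θ (l + 1) m
        + -(1:ℝ) * θ l m) / 4
        = (θ (l + 1) (m + 1) - θ l (m + 1) + θ (l + 1) m - θ l m) / 4 := by ring
    have e2 : (- -(1:ℝ) * θ (l + 1) (m + 1) + - -(1:ℝ) * θ l (m + 1) + -(1:ℝ) * θ (l + 1) m
        + -(1:ℝ) * θ l m) / 4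
        = (θ (l + 1) (m + 1) + θ l (m + 1) - θ (l + 1) m - θ l m) / 4 := by ring
    rw [e1, e2, h]
end

section
/- Let h > 0, μ > 0, φ ∈ ℝ and set ε = μh²/4. Let θ : ℤ → ℝ satisfy sin((θₙ₊₁ − 2θₙ + θₙ₋₁)/4) + ε sin((θₙ₊₁ + 2θₙ + θₙ₋₁)/4 − φ) = 0 for all n ∈ ℤ. Let Λ = cos((θₙ₊₁ − θₙ)/2) + ε cos((θₙ₊₁ + θₙ)/2 − φ) (independent of n), and assume Λ ≠ 0 and cos((θₙ₊₁ − θₙ₋₁)/4) ≠ 0 for all n. Set Θₙ = (θₙ₊₁ + θₙ)/2, κₙ = (2/h) tan((θₙ₊₁ − θₙ₋₁)/4), let γ : ℤ → ℝ² satisfy γₙ₊₁ = γₙ + h·(cos Θₙ, sin Θₙ), and define uₙ = ⟨(sin φ, −cos φ), γₙ⟩. Then there exists a constant A ∈ ℝ such that κₙ = (μ/Λ) uₙ + A for all n ∈ ℤ. -/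
/-!
Along a solution of the discrete pendulum equation, the two equations at `n` and `n + 1`
together with the conserved quantity `Λ` give the trigonometric identity
`Λ · (tan bₙ − tan aₙ) = −2ε sin(Θₙ − φ)`, where `aₙ = (θₙ₊₁ − θₙ₋₁)/4`, `bₙ = aₙ₊₁`.
The left side is `(hΛ/2) (κₙ₊₁ − κₙ)` and the right side is `(μh/2)(uₙ₊₁ − uₙ)`, so
`κₙ − (μ/Λ) uₙ` is invariant under `n ↦ n + 1`, hence constant on `ℤ`.
-/

open Real

/-- With `a = β - y` and `b = β + x`, this is `Λ sin (b - a) = -2ε sin p cos a cos b`. -/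
theorem conserved_mul_sin_add_of_pendulum (β p x y e : ℝ)
    (hx : sin x + e * sin (p + β + x) = 0) (hy : sin y + e * sin (p - β + y) = 0) :
    (cos β + e * cos p) * sin (x + y) = -(2 * e) * sin p * (cos (β + x) * cos (β - y)) := by
  simp only [sin_add, cos_add, sin_sub, cos_sub] at hx hy ⊢
  linear_combination (cos β * cos y + sin β * sin y) * hx
    + (cos β * cos x - sin β * sin x) * hy
    - e * cos p * (sin x * cos y + cos x * sin y) * sin_sq_add_cos_sq β

theorem pendulum_conserved_mul_tan_sub_tan (e φ t₀ t₁ t₂ t₃ : ℝ)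
    (h₁ : sin ((t₂ - 2 * t₁ + t₀) / 4) + e * sin ((t₂ + 2 * t₁ + t₀) / 4 - φ) = 0)
    (h₂ : sin ((t₃ - 2 * t₂ + t₁) / 4) + e * sin ((t₃ + 2 * t₂ + t₁) / 4 - φ) = 0)
    (ha : cos ((t₂ - t₀) / 4) ≠ 0) (hb : cos ((t₃ - t₁) / 4) ≠ 0) :
    (cos ((t₂ - t₁) / 2) + e * cos ((t₂ + t₁) / 2 - φ))
        * (tan ((t₃ - t₁) / 4) - tan ((t₂ - t₀) / 4))
      = -(2 * e) * sin ((t₂ + t₁) / 2 - φ) := by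
  have key := conserved_mul_sin_add_of_pendulum ((t₂ - t₁) / 2) ((t₂ + t₁) / 2 - φ)
    ((t₃ - 2 * t₂ + t₁) / 4) ((t₂ - 2 * t₁ + t₀) / 4) e
    (by convert h₂ using 4; ring) (by convert h₁ using 4; ring)
  rw [show (t₂ - t₁) / 2 + (t₃ - 2 * t₂ + t₁) / 4 = (t₃ - t₁) / 4 by ring,
    show (t₂ - t₁) / 2 - (t₂ - 2 * t₁ + t₀) / 4 = (t₂ - t₀) / 4 by ring,
    show (t₃ - 2 * t₂ + t₁) / 4 + (t₂ - 2 * t₁ + t₀) / 4 = (t₃ - t₁) / 4 - (t₂ - t₀) / 4 by ring,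
    sin_sub] at key
  rw [tan_eq_sin_div_cos, tan_eq_sin_div_cos, div_sub_div _ _ hb ha, ← mul_div_assoc,
    div_eq_iff (mul_ne_zero hb ha)]
  linear_combination key

theorem exists_eq_mul_add_of_forall_sub_eq_mul_sub {f g : ℤ → ℝ} {c : ℝ}
    (hfg : ∀ n, f (n + 1) - f n = c * (g (n + 1) - g n)) :
    ∃ A : ℝ, ∀ n, f n = c * g n + A := by
  have hper : Function.Periodic (fun n => f n - c * g n) 1 := fun n => by
    linear_combination hfg n
  refine ⟨f 0 - c * g 0, fun n => ?_⟩
  have := hper.int_mul_eq n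
  simp only [Int.cast_id, mul_one] at this
  linear_combination this

theorem discrete_elastica_curvature_affine_general (h μ φ : ℝ) (hh : 0 < h)
    (ε : ℝ) (hε : ε = μ * h ^ 2 / 4)
    (θ : ℤ → ℝ)
    (hpend : ∀ n : ℤ,
      Real.sin ((θ (n + 1) - 2 * θ n + θ (n - 1)) / 4)
        + ε * Real.sin ((θ (n + 1) + 2 * θ n + θ (n - 1)) / 4 - φ) = 0)
    (Λ : ℝ)
    (hΛ : ∀ n : ℤ,
      Real.cos ((θ (n + 1) - θ n) / 2)
        + ε * Real.cos ((θ (n + 1) + θ n) / 2 - φ) = Λ)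
    (hΛ0 : Λ ≠ 0)
    (hcos : ∀ n : ℤ, Real.cos ((θ (n + 1) - θ (n - 1)) / 4) ≠ 0)
    (Θ : ℤ → ℝ) (hΘ : ∀ n : ℤ, Θ n = (θ (n + 1) + θ n) / 2)
    (κ : ℤ → ℝ) (hκ : ∀ n : ℤ, κ n = 2 / h * Real.tan ((θ (n + 1) - θ (n - 1)) / 4))
    (γ : ℤ → ℝ × ℝ)
    (hγ : ∀ n : ℤ, γ (n + 1) = γ n + h • ((Real.cos (Θ n), Real.sin (Θ n)) : ℝ × ℝ))
    (u : ℤ → ℝ) (hu : ∀ n : ℤ, u n = Real.sin φ * (γ n).1 - Real.cos φ * (γ n).2) :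
    ∃ A : ℝ, ∀ n : ℤ, κ n = μ / Λ * u n + A := by
  refine exists_eq_mul_add_of_forall_sub_eq_mul_sub fun n => ?_
  have hshift : n + 1 + 1 = n + 2 ∧ n + 1 - 1 = n := ⟨by ring, by ring⟩
  have hu_step : u (n + 1) - u n = -h * sin (Θ n - φ) := by
    simp only [hu, hγ n, Prod.fst_add, Prod.snd_add, Prod.smul_mk, smul_eq_mul, sin_sub]
    ring
  have hκ_step : Λ * (κ (n + 1) - κ n) = -(μ * h) * sin (Θ n - φ) := by
    have htan := pendulum_conserved_mul_tan_sub_tan ε φ (θ (n - 1)) (θ n) (θ (n + 1)) (θ (n + 2))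
      (hpend n) (by simpa only [hshift] using hpend (n + 1)) (hcos n)
      (by simpa only [hshift] using hcos (n + 1))
    rw [hΛ n, ← hΘ n, hε] at htan
    rw [hκ, hκ, hshift.1, hshift.2]
    field_simp
    linear_combination 2 * htan
  rw [hu_step]
  field_simp
  linear_combination hκ_step

/-- For a general discrete elastica segment, the discrete curvature is an
affine function of the projection `uₙ = ⟨(sin φ, −cos φ), γₙ⟩`: `κₙ = (μ/Λ) uₙ + A`. -/
theorem discrete_elastica_curvature_affine (h μ φ : ℝ) (hh : 0 < h) (hμ : 0 < μ)
    (ε : ℝ) (hε : ε = μ * h ^ 2 / 4)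
    (θ : ℤ → ℝ)
    (hpend : ∀ n : ℤ,
      Real.sin ((θ (n + 1) - 2 * θ n + θ (n - 1)) / 4)
        + ε * Real.sin ((θ (n + 1) + 2 * θ n + θ (n - 1)) / 4 - φ) = 0)
    (Λ : ℝ)
    (hΛ : ∀ n : ℤ,
      Real.cos ((θ (n + 1) - θ n) / 2)
        + ε * Real.cos ((θ (n + 1) + θ n) / 2 - φ) = Λ)
    (hΛ0 : Λ ≠ 0)
    (hcos : ∀ n : ℤ, Real.cos ((θ (n + 1) - θ (n - 1)) / 4) ≠ 0)
    (Θ : ℤ → ℝ) (hΘ : ∀ n : ℤ, Θ n = (θ (n + 1) + θ n) / 2)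
    (κ : ℤ → ℝ) (hκ : ∀ n : ℤ, κ n = 2 / h * Real.tan ((θ (n + 1) - θ (n - 1)) / 4))
    (γ : ℤ → ℝ × ℝ)
    (hγ : ∀ n : ℤ, γ (n + 1) = γ n + h • ((Real.cos (Θ n), Real.sin (Θ n)) : ℝ × ℝ))
    (u : ℤ → ℝ) (hu : ∀ n : ℤ, u n = Real.sin φ * (γ n).1 - Real.cos φ * (γ n).2) :
    ∃ A : ℝ, ∀ n : ℤ, κ n = μ / Λ * u n + A :=
  discrete_elastica_curvature_affine_general h μ φ hh ε hε θ hpend Λ hΛ hΛ0 hcos Θ hΘ κ hκ γ hγ u hu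
end

section
/- Let h > 0, μ > 0, φ ∈ ℝ and set ε = μh²/4. Let θ : ℤ → ℝ satisfy sin((θₙ₊₁ − 2θₙ + θₙ₋₁)/4) + ε sin((θₙ₊₁ + 2θₙ + θₙ₋₁)/4 − φ) = 0 for all n ∈ ℤ. Let Λ = cos((θₙ₊₁ − θₙ)/2) + ε cos((θₙ₊₁ + θₙ)/2 − φ) (independent of n), and assume Λ ≠ 0 and cos((θₙ₊₁ − θₙ₋₁)/4) ≠ 0 for all n. Set Θₙ = (θₙ₊₁ + θₙ)/2, κₙ = (2/h) tan((θₙ₊₁ − θₙ₋₁)/4), let γ : ℤ → ℝ² satisfy γₙ₊₁ = γₙ + h·(cos Θₙ, sin Θₙ), and define uₙ = ⟨(sin φ, −cos φ), γₙ⟩ and sin Ψₙ = cos(Θₙ − φ). Then there exist constants A, B ∈ ℝ such that for all n ∈ ℤ, κₙ = (μ/Λ) uₙ + A and sin Ψₙ = (μ/(2Λ)) uₙ₊₁ uₙ + A (uₙ₊₁ + uₙ)/2 + B. -/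
/-!
Write `Dₙ = (θₙ₊₁ - θₙ)/2`, `Cₙ = Θₙ - φ` and `Bₙ = (θₙ₊₁ - θₙ₋₁)/4`, so that `κₙ = (2/h) tan Bₙ`.
The pendulum equation at `n` says `sin (Bₙ - Dₙ) + ε sin (Bₙ - Cₙ) = 0`, which turns into
`Λ tan Bₙ = sin Dₙ + ε sin Cₙ`; read backwards at `n + 1` it gives `Λ tan Bₙ₊₁ = sin Dₙ - ε sin Cₙ`.
Subtracting, `κₙ₊₁ - κₙ = -(μh/Λ) sin Cₙ = (μ/Λ)(uₙ₊₁ - uₙ)`, so `κ - (μ/Λ) u` is constant.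
Since `Cₙ₊₁ - Cₙ = 2Bₙ₊₁`, sum-to-product gives
`cos Cₙ₊₁ - cos Cₙ = -tan Bₙ₊₁ (sin Cₙ₊₁ + sin Cₙ) = (κₙ₊₁/2)(uₙ₊₂ - uₙ)`,
which is also the increment of the quadratic expression once `κₙ₊₁` is affine in `uₙ₊₁`.
-/

open Real

lemma exists_eq_add_const_of_forall_sub_eq {G : Type*} [AddCommGroup G] {f g : ℤ → G}
    (h : ∀ n, f (n + 1) - f n = g (n + 1) - g n) : ∃ c, ∀ n, f n = g n + c := by
  have hper : Function.Periodic (fun n => f n - g n) 1 := fun n => by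
    simp only
    rw [sub_eq_sub_iff_sub_eq_sub, h n]
  exact ⟨f 0 - g 0, fun n => by simpa [sub_eq_iff_eq_add'] using hper.int_mul_eq n⟩

lemma cos_sub_cos_eq_neg_tan_mul {p q : ℝ} (hc : cos ((p - q) / 2) ≠ 0) :
    cos p - cos q = -tan ((p - q) / 2) * (sin p + sin q) := by
  rw [cos_sub_cos, sin_add_sin, tan_eq_sin_div_cos]
  field_simp

lemma mul_tan_eq_of_sin_sub_add_mul_sin_sub {x C D ε : ℝ} (hx : cos x ≠ 0)
    (h : sin (x - D) + ε * sin (x - C) = 0) :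
    (cos D + ε * cos C) * tan x = sin D + ε * sin C := by
  rw [tan_eq_sin_div_cos, mul_div_assoc', div_eq_iff hx]
  rw [sin_sub, sin_sub] at h
  linear_combination h

section DiscretePendulum

variable {θ₀ θ₁ θ₂ θ₃ ε φ : ℝ}

lemma pendulum_energy_mul_tan_eq_of_forward
    (hpend : sin ((θ₂ - 2 * θ₁ + θ₀) / 4) + ε * sin ((θ₂ + 2 * θ₁ + θ₀) / 4 - φ) = 0)
    (hc : cos ((θ₂ - θ₀) / 4) ≠ 0) :
    (cos ((θ₂ - θ₁) / 2) + ε * cos ((θ₂ + θ₁) / 2 - φ)) * tan ((θ₂ - θ₀) / 4)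
      = sin ((θ₂ - θ₁) / 2) + ε * sin ((θ₂ + θ₁) / 2 - φ) := by
  refine mul_tan_eq_of_sin_sub_add_mul_sin_sub hc ?_
  rw [show (θ₂ - θ₀) / 4 - (θ₂ - θ₁) / 2 = -((θ₂ - 2 * θ₁ + θ₀) / 4) by ring,
    show (θ₂ - θ₀) / 4 - ((θ₂ + θ₁) / 2 - φ) = -((θ₂ + 2 * θ₁ + θ₀) / 4 - φ) by ring,
    sin_neg, sin_neg]
  linear_combination -hpend

lemma pendulum_energy_mul_tan_eq_of_backward
    (hpend : sin ((θ₂ - 2 * θ₁ + θ₀) / 4) + ε * sin ((θ₂ + 2 * θ₁ + θ₀) / 4 - φ) = 0)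
    (hc : cos ((θ₂ - θ₀) / 4) ≠ 0) :
    (cos ((θ₁ - θ₀) / 2) + ε * cos ((θ₁ + θ₀) / 2 - φ)) * tan ((θ₂ - θ₀) / 4)
      = sin ((θ₁ - θ₀) / 2) - ε * sin ((θ₁ + θ₀) / 2 - φ) := by
  have key := mul_tan_eq_of_sin_sub_add_mul_sin_sub (C := -((θ₁ + θ₀) / 2 - φ))
    (D := (θ₁ - θ₀) / 2) (ε := ε) hc (by
      rw [show (θ₂ - θ₀) / 4 - (θ₁ - θ₀) / 2 = (θ₂ - 2 * θ₁ + θ₀) / 4 by ring,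
        show (θ₂ - θ₀) / 4 - -((θ₁ + θ₀) / 2 - φ) = (θ₂ + 2 * θ₁ + θ₀) / 4 - φ by ring]
      exact hpend)
  rw [cos_neg, sin_neg] at key
  linear_combination key

lemma pendulum_energy_mul_tan_sub_tan
    (hpend₁ : sin ((θ₂ - 2 * θ₁ + θ₀) / 4) + ε * sin ((θ₂ + 2 * θ₁ + θ₀) / 4 - φ) = 0)
    (hpend₂ : sin ((θ₃ - 2 * θ₂ + θ₁) / 4) + ε * sin ((θ₃ + 2 * θ₂ + θ₁) / 4 - φ) = 0)
    (hc₁ : cos ((θ₂ - θ₀) / 4) ≠ 0) (hc₂ : cos ((θ₃ - θ₁) / 4) ≠ 0) :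
    (cos ((θ₂ - θ₁) / 2) + ε * cos ((θ₂ + θ₁) / 2 - φ))
        * (tan ((θ₃ - θ₁) / 4) - tan ((θ₂ - θ₀) / 4))
      = -2 * ε * sin ((θ₂ + θ₁) / 2 - φ) := by
  linear_combination pendulum_energy_mul_tan_eq_of_backward hpend₂ hc₂
    - pendulum_energy_mul_tan_eq_of_forward hpend₁ hc₁

end DiscretePendulum

lemma sin_mul_fst_sub_cos_mul_snd_add_smul (φ h Θ : ℝ) (p : ℝ × ℝ) :
    sin φ * (p + h • ((cos Θ, sin Θ) : ℝ × ℝ)).1 - cos φ * (p + h • ((cos Θ, sin Θ) : ℝ × ℝ)).2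
      = sin φ * p.1 - cos φ * p.2 - h * sin (Θ - φ) := by
  simp only [Prod.fst_add, Prod.snd_add, Prod.smul_fst, Prod.smul_snd, smul_eq_mul, sin_sub]
  ring

theorem discrete_elastica_quadratic_sin_general (h μ φ : ℝ) (hh : 0 < h)
    (ε : ℝ) (hε : ε = μ * h ^ 2 / 4)
    (θ : ℤ → ℝ)
    (hpend : ∀ n : ℤ,
      Real.sin ((θ (n + 1) - 2 * θ n + θ (n - 1)) / 4)
        + ε * Real.sin ((θ (n + 1) + 2 * θ n + θ (n - 1)) / 4 - φ) = 0)
    (Λ : ℝ)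
    (hΛ : ∀ n : ℤ,
      Real.cos ((θ (n + 1) - θ n) / 2)
        + ε * Real.cos ((θ (n + 1) + θ n) / 2 - φ) = Λ)
    (hΛ0 : Λ ≠ 0)
    (hcos : ∀ n : ℤ, Real.cos ((θ (n + 1) - θ (n - 1)) / 4) ≠ 0)
    (Θ : ℤ → ℝ) (hΘ : ∀ n : ℤ, Θ n = (θ (n + 1) + θ n) / 2)
    (κ : ℤ → ℝ) (hκ : ∀ n : ℤ, κ n = 2 / h * Real.tan ((θ (n + 1) - θ (n - 1)) / 4))
    (γ : ℤ → ℝ × ℝ)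
    (hγ : ∀ n : ℤ, γ (n + 1) = γ n + h • ((Real.cos (Θ n), Real.sin (Θ n)) : ℝ × ℝ))
    (u : ℤ → ℝ) (hu : ∀ n : ℤ, u n = Real.sin φ * (γ n).1 - Real.cos φ * (γ n).2)
    (sinΨ : ℤ → ℝ) (hΨ : ∀ n : ℤ, sinΨ n = Real.cos (Θ n - φ)) :
    ∃ A B : ℝ, ∀ n : ℤ,
      κ n = μ / Λ * u n + A ∧
      sinΨ n = μ / (2 * Λ) * u (n + 1) * u n + A * (u (n + 1) + u n) / 2 + B := by
  have hh0 : h ≠ 0 := hh.ne'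
  have hu_step (n : ℤ) : u (n + 1) - u n = -h * sin (Θ n - φ) := by
    rw [hu, hu, hγ, sin_mul_fst_sub_cos_mul_snd_add_smul]
    ring
  have hκ_step (n : ℤ) : κ (n + 1) - κ n = μ / Λ * u (n + 1) - μ / Λ * u n := by
    have key := pendulum_energy_mul_tan_sub_tan (hpend n) (by simpa using hpend (n + 1))
      (hcos n) (by simpa using hcos (n + 1))
    rw [hΛ n, hε] at key
    rw [← mul_sub, hu_step, hκ, hκ, add_sub_cancel_right, hΘ]
    linear_combination (norm := skip) 2 / (h * Λ) * key
    field_simp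
    ring
  obtain ⟨A, hA⟩ := exists_eq_add_const_of_forall_sub_eq (g := fun n => μ / Λ * u n) hκ_step
  have hΨ_step (n : ℤ) : sinΨ (n + 1) - sinΨ n = κ (n + 1) / 2 * (u (n + 1 + 1) - u n) := by
    have hB : (Θ (n + 1) - φ - (Θ n - φ)) / 2 = (θ (n + 1 + 1) - θ (n + 1 - 1)) / 4 := by
      rw [hΘ, hΘ, add_sub_cancel_right]
      ring
    have hcB := hcos (n + 1)
    rw [← hB] at hcB
    rw [hΨ, hΨ, cos_sub_cos_eq_neg_tan_mul hcB, hκ, ← hB,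
      show u (n + 1 + 1) - u n = (u (n + 1 + 1) - u (n + 1)) + (u (n + 1) - u n) by ring,
      hu_step, hu_step]
    field_simp
    ring
  obtain ⟨B, hB⟩ := exists_eq_add_const_of_forall_sub_eq
    (g := fun n => μ / (2 * Λ) * u (n + 1) * u n + A * (u (n + 1) + u n) / 2) fun n => by
      rw [hΨ_step, hA (n + 1)]
      field_simp
      ring
  exact ⟨A, B, fun n => ⟨hA n, hB n⟩⟩

/-- For a general discrete elastica segment, `κₙ` is affine in `uₙ` and
`sin Ψₙ = cos(Θₙ − φ)` is a quadratic expression in `uₙ, uₙ₊₁`. -/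
theorem discrete_elastica_quadratic_sin (h μ φ : ℝ) (hh : 0 < h) (hμ : 0 < μ)
    (ε : ℝ) (hε : ε = μ * h ^ 2 / 4)
    (θ : ℤ → ℝ)
    (hpend : ∀ n : ℤ,
      Real.sin ((θ (n + 1) - 2 * θ n + θ (n - 1)) / 4)
        + ε * Real.sin ((θ (n + 1) + 2 * θ n + θ (n - 1)) / 4 - φ) = 0)
    (Λ : ℝ)
    (hΛ : ∀ n : ℤ,
      Real.cos ((θ (n + 1) - θ n) / 2)
        + ε * Real.cos ((θ (n + 1) + θ n) / 2 - φ) = Λ)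
    (hΛ0 : Λ ≠ 0)
    (hcos : ∀ n : ℤ, Real.cos ((θ (n + 1) - θ (n - 1)) / 4) ≠ 0)
    (Θ : ℤ → ℝ) (hΘ : ∀ n : ℤ, Θ n = (θ (n + 1) + θ n) / 2)
    (κ : ℤ → ℝ) (hκ : ∀ n : ℤ, κ n = 2 / h * Real.tan ((θ (n + 1) - θ (n - 1)) / 4))
    (γ : ℤ → ℝ × ℝ)
    (hγ : ∀ n : ℤ, γ (n + 1) = γ n + h • ((Real.cos (Θ n), Real.sin (Θ n)) : ℝ × ℝ))
    (u : ℤ → ℝ) (hu : ∀ n : ℤ, u n = Real.sin φ * (γ n).1 - Real.cos φ * (γ n).2)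
    (sinΨ : ℤ → ℝ) (hΨ : ∀ n : ℤ, sinΨ n = Real.cos (Θ n - φ)) :
    ∃ A B : ℝ, ∀ n : ℤ,
      κ n = μ / Λ * u n + A ∧
      sinΨ n = μ / (2 * Λ) * u (n + 1) * u n + A * (u (n + 1) + u n) / 2 + B :=
  discrete_elastica_quadratic_sin_general h μ φ hh ε hε θ hpend Λ hΛ hΛ0 hcos Θ hΘ κ hκ γ hγ u hu
    sinΨ hΨ
end
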